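/- arXiv:math/0608452 — 10 statements merged into one kernel-verified Lean document; each statement's English description precedes it below -/
import Mathlib

section
/- Let S be a double semigroup. For any sixteen elements of S arranged in a 4×4 grid, the 4×4 grid product is invariant under the following cyclic permutation of the four middle entries (positions (2,2), (2,3), (3,2), (3,3)): if the middle 2×2 block is (a, b; c, d) (top row a, b; bottom row c, d), then the grid product equals the grid product with middle block (b, d; a, c), all other twelve entries kept fixed. -/
/-- Horizontal product of a row of four elements. -/
def hrow {S : Type*} (h : S → S → S) (a b c d : S) : S := h (h (h a b) c) d

/-- Vertical product of four rows: the 4×4 grid product. -/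
def grid4 {S : Type*} (v : S → S → S) (r1 r2 r3 r4 : S) : S := v (v (v r1 r2) r3) r4

/-- In a double semigroup, the 4×4 grid product is invariant under the cyclic
permutation of the middle 2×2 block sending (a, b; c, d) to (b, d; a, c). -/
theorem grid_middle_cycle {S : Type*} (h v : S → S → S)
    (hassoc : ∀ x y z : S, h (h x y) z = h x (h y z))
    (vassoc : ∀ x y z : S, v (v x y) z = v x (v y z))
    (interchange : ∀ x y z w : S, v (h x y) (h z w) = h (v x z) (v y w))
    (x11 x12 x13 x14 x21 x24 x31 x34 x41 x42 x43 x44 a b c d : S) :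
    grid4 v (hrow h x11 x12 x13 x14) (hrow h x21 a b x24)
            (hrow h x31 c d x34) (hrow h x41 x42 x43 x44)
    = grid4 v (hrow h x11 x12 x13 x14) (hrow h x21 b d x24)
              (hrow h x31 a c x34) (hrow h x41 x42 x43 x44) := by
  simp only [grid4, hrow, hassoc, vassoc]
  calc (v (h x11 (h x12 (h x13 x14))) (v (h x21 (h a (h b x24))) (v (h x31 (h c (h d x34))) (h x41 (h x42 (h x43 x44))))))
    _ = (v (v (h (h x11 x12) (h x13 x14)) (h (h x21 (h a b)) x24)) (v (h x31 (h c (h d x34))) (h x41 (h x42 (h x43 x44))))) := by simp only [hassoc, vassoc]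
    _ = (v (h (v (h x11 x12) (h x21 (h a b))) (v (h x13 x14) x24)) (v (h x31 (h c (h d x34))) (h x41 (h x42 (h x43 x44))))) := by rw [interchange (h x11 x12) (h x13 x14) (h x21 (h a b)) x24]
    _ = (v (v (h (v (h x11 x12) (h x21 (h a b))) (v (h x13 x14) x24)) (h (h x31 (h c d)) x34)) (h x41 (h x42 (h x43 x44)))) := by simp only [hassoc, vassoc]
    _ = (v (h (v (v (h x11 x12) (h x21 (h a b))) (h x31 (h c d))) (v (v (h x13 x14) x24) x34)) (h x41 (h x42 (h x43 x44)))) := by rw [interchange (v (h x11 x12) (h x21 (h a b))) (v (h x13 x14) x24) (h x31 (h c d)) x34]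
    _ = (v (h (v (v (h x11 x12) (h x21 (h a b))) (h x31 (h c d))) (v (h x13 x14) (v x24 x34))) (h x41 (h x42 (h x43 x44)))) := by simp only [hassoc, vassoc]
    _ = (v (v (h (v (h x11 x12) (h x21 (h a b))) (h x13 x14)) (h (h x31 (h c d)) (v x24 x34))) (h x41 (h x42 (h x43 x44)))) := by rw [← interchange (v (h x11 x12) (h x21 (h a b))) (h x13 x14) (h x31 (h c d)) (v x24 x34)]
    _ = (v (h (v (h x11 x12) (h x21 (h a b))) (h x13 x14)) (v (h x31 (h c (h d (v x24 x34)))) (h x41 (h x42 (h x43 x44))))) := by simp only [hassoc, vassoc]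
    _ = (v (h (v (h x11 x12) (h x21 (h a b))) (h x13 x14)) (h (v x31 x41) (v (h c (h d (v x24 x34))) (h x42 (h x43 x44))))) := by rw [interchange x31 (h c (h d (v x24 x34))) x41 (h x42 (h x43 x44))]
    _ = (v (h (v (h x11 x12) (h x21 (h a b))) (h x13 x14)) (h (v x31 x41) (v (h (h c d) (v x24 x34)) (h x42 (h x43 x44))))) := by simp only [hassoc, vassoc]
    _ = (v (h (v (h x11 x12) (h x21 (h a b))) (h x13 x14)) (h (v x31 x41) (h (v (h c d) x42) (v (v x24 x34) (h x43 x44))))) := by rw [interchange (h c d) (v x24 x34) x42 (h x43 x44)]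
    _ = (v (h (v (h x11 x12) (h x21 (h a b))) (h x13 x14)) (h (v x31 x41) (h (v (h c d) x42) (v x24 (v x34 (h x43 x44)))))) := by simp only [hassoc, vassoc]
    _ = (v (h (v (h x11 x12) (h x21 (h a b))) (h x13 x14)) (h (v x31 x41) (v (h (h c d) x24) (h x42 (v x34 (h x43 x44)))))) := by rw [← interchange (h c d) x24 x42 (v x34 (h x43 x44))]
    _ = (v (h (v (h x11 x12) (h x21 (h a b))) (h x13 x14)) (h (v x31 x41) (v (h c (h d x24)) (h x42 (v x34 (h x43 x44)))))) := by simp only [hassoc, vassoc]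
    _ = (v (h (v (h x11 x12) (h x21 (h a b))) (h x13 x14)) (h (v x31 x41) (h (v c x42) (v (h d x24) (v x34 (h x43 x44)))))) := by rw [interchange c (h d x24) x42 (v x34 (h x43 x44))]
    _ = (v (h (v (h x11 x12) (h x21 (h a b))) (h x13 x14)) (h (h (v x31 x41) (v c x42)) (v (h d x24) (v x34 (h x43 x44))))) := by simp only [hassoc, vassoc]
    _ = (h (v (v (h x11 x12) (h x21 (h a b))) (h (v x31 x41) (v c x42))) (v (h x13 x14) (v (h d x24) (v x34 (h x43 x44))))) := by rw [interchange (v (h x11 x12) (h x21 (h a b))) (h x13 x14) (h (v x31 x41) (v c x42)) (v (h d x24) (v x34 (h x43 x44)))]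
    _ = (h (v (h x11 x12) (v (h (h x21 a) b) (h (v x31 x41) (v c x42)))) (v (h x13 x14) (v (h d x24) (v x34 (h x43 x44))))) := by simp only [hassoc, vassoc]
    _ = (h (v (h x11 x12) (h (v (h x21 a) (v x31 x41)) (v b (v c x42)))) (v (h x13 x14) (v (h d x24) (v x34 (h x43 x44))))) := by rw [interchange (h x21 a) b (v x31 x41) (v c x42)]
    _ = (h (v (h x11 x12) (h (v (h x21 a) (v x31 x41)) (v (v b c) x42))) (v (h x13 x14) (v (h d x24) (v x34 (h x43 x44))))) := by simp only [hassoc, vassoc]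
    _ = (h (v (h x11 x12) (v (h (h x21 a) (v b c)) (h (v x31 x41) x42))) (v (h x13 x14) (v (h d x24) (v x34 (h x43 x44))))) := by rw [← interchange (h x21 a) (v b c) (v x31 x41) x42]
    _ = (h (v (h x11 x12) (v (h x21 (h a (v b c))) (h (v x31 x41) x42))) (v (h x13 x14) (v (h d x24) (v x34 (h x43 x44))))) := by simp only [hassoc, vassoc]
    _ = (h (v (h x11 x12) (h (v x21 (v x31 x41)) (v (h a (v b c)) x42))) (v (h x13 x14) (v (h d x24) (v x34 (h x43 x44))))) := by rw [interchange x21 (h a (v b c)) (v x31 x41) x42]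
    _ = (h (v (h x11 x12) (h (v (v x21 x31) x41) (v (h a (v b c)) x42))) (v (h x13 x14) (v (h d x24) (v x34 (h x43 x44))))) := by simp only [hassoc, vassoc]
    _ = (h (v (h x11 x12) (v (h (v x21 x31) (h a (v b c))) (h x41 x42))) (v (h x13 x14) (v (h d x24) (v x34 (h x43 x44))))) := by rw [← interchange (v x21 x31) (h a (v b c)) x41 x42]
    _ = (h (v (v (h x11 x12) (h (v x21 x31) (h a (v b c)))) (h x41 x42)) (v (v (h x13 x14) (v (h d x24) x34)) (h x43 x44))) := by simp only [hassoc, vassoc]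
    _ = (v (h (v (h x11 x12) (h (v x21 x31) (h a (v b c)))) (v (h x13 x14) (v (h d x24) x34))) (h (h x41 x42) (h x43 x44))) := by rw [← interchange (v (h x11 x12) (h (v x21 x31) (h a (v b c)))) (v (h x13 x14) (v (h d x24) x34)) (h x41 x42) (h x43 x44)]
    _ = (v (h (v (h x11 x12) (h (h (v x21 x31) a) (v b c))) (v (h x13 x14) (v (h d x24) x34))) (h x41 (h x42 (h x43 x44)))) := by simp only [hassoc, vassoc]
    _ = (v (h (h (v x11 (h (v x21 x31) a)) (v x12 (v b c))) (v (h x13 x14) (v (h d x24) x34))) (h x41 (h x42 (h x43 x44)))) := by rw [interchange x11 x12 (h (v x21 x31) a) (v b c)]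
    _ = (v (h (h (v x11 (h (v x21 x31) a)) (v (v x12 b) c)) (v (h x13 x14) (v (h d x24) x34))) (h x41 (h x42 (h x43 x44)))) := by simp only [hassoc, vassoc]
    _ = (v (h (v (h x11 (v x12 b)) (h (h (v x21 x31) a) c)) (v (h x13 x14) (v (h d x24) x34))) (h x41 (h x42 (h x43 x44)))) := by rw [← interchange x11 (v x12 b) (h (v x21 x31) a) c]
    _ = (v (h (v (h x11 (v x12 b)) (h (v x21 x31) (h a c))) (v (h x13 x14) (v (h d x24) x34))) (h x41 (h x42 (h x43 x44)))) := by simp only [hassoc, vassoc]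
    _ = (v (h (h (v x11 (v x21 x31)) (v (v x12 b) (h a c))) (v (h x13 x14) (v (h d x24) x34))) (h x41 (h x42 (h x43 x44)))) := by rw [interchange x11 (v x12 b) (v x21 x31) (h a c)]
    _ = (v (h (v x11 (v x21 x31)) (h (v (v x12 b) (h a c)) (v (v (h x13 x14) (h d x24)) x34))) (h x41 (h x42 (h x43 x44)))) := by simp only [hassoc, vassoc]
    _ = (v (h (v x11 (v x21 x31)) (v (h (v x12 b) (v (h x13 x14) (h d x24))) (h (h a c) x34))) (h x41 (h x42 (h x43 x44)))) := by rw [← interchange (v x12 b) (v (h x13 x14) (h d x24)) (h a c) x34]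
    _ = (v (h (v (v x11 x21) x31) (v (h (v x12 b) (v (h x13 x14) (h d x24))) (h a (h c x34)))) (h x41 (h x42 (h x43 x44)))) := by simp only [hassoc, vassoc]
    _ = (v (v (h (v x11 x21) (h (v x12 b) (v (h x13 x14) (h d x24)))) (h x31 (h a (h c x34)))) (h x41 (h x42 (h x43 x44)))) := by rw [← interchange (v x11 x21) (h (v x12 b) (v (h x13 x14) (h d x24))) x31 (h a (h c x34))]
    _ = (v (h (v x11 x21) (h (v x12 b) (v (h x13 x14) (h d x24)))) (v (h x31 (h a (h c x34))) (h x41 (h x42 (h x43 x44))))) := by simp only [hassoc, vassoc]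
    _ = (v (h (v x11 x21) (v (h x12 (h x13 x14)) (h b (h d x24)))) (v (h x31 (h a (h c x34))) (h x41 (h x42 (h x43 x44))))) := by rw [← interchange x12 (h x13 x14) b (h d x24)]
    _ = (v (h (v x11 x21) (v (h x12 (h x13 x14)) (h b (h d x24)))) (v (h x31 (h a (h c x34))) (h x41 (h x42 (h x43 x44))))) := by simp only [hassoc, vassoc]
    _ = (v (v (h x11 (h x12 (h x13 x14))) (h x21 (h b (h d x24)))) (v (h x31 (h a (h c x34))) (h x41 (h x42 (h x43 x44))))) := by rw [← interchange x11 (h x12 (h x13 x14)) x21 (h b (h d x24))]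
    _ = (v (h x11 (h x12 (h x13 x14))) (v (h x21 (h b (h d x24))) (v (h x31 (h a (h c x34))) (h x41 (h x42 (h x43 x44)))))) := by simp only [hassoc, vassoc]
end

section
/- Let S be a double semigroup. For any sixteen elements of S arranged in a 4×4 grid, the 4×4 grid product is invariant under the following 3-cycle of the four middle entries (positions (2,2), (2,3), (3,2), (3,3)) fixing the entry at (2,2): if the middle 2×2 block is (w, x; y, z) (top row w, x; bottom row y, z), then the grid product equals the grid product with middle block (w, y; z, x), all other twelve entries kept fixed. -/
/-- In a double semigroup, the 4×4 grid product is invariant under the 3-cycle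
of the middle 2×2 block sending (w, x; y, z) to (w, y; z, x). -/
theorem grid_middle_three_cycle {S : Type*} (h v : S → S → S)
    (hassoc : ∀ x y z : S, h (h x y) z = h x (h y z))
    (vassoc : ∀ x y z : S, v (v x y) z = v x (v y z))
    (interchange : ∀ x y z w : S, v (h x y) (h z w) = h (v x z) (v y w))
    (x11 x12 x13 x14 x21 x24 x31 x34 x41 x42 x43 x44 w x y z : S) :
    grid4 v (hrow h x11 x12 x13 x14) (hrow h x21 w x x24)
            (hrow h x31 y z x34) (hrow h x41 x42 x43 x44)
    = grid4 v (hrow h x11 x12 x13 x14) (hrow h x21 w y x24)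
              (hrow h x31 z x x34) (hrow h x41 x42 x43 x44) := by
  calc grid4 v (hrow h x11 x12 x13 x14) (hrow h x21 w x x24) (hrow h x31 y z x34) (hrow h x41 x42 x43 x44)
      = v (h (x11) (h (x12) (h (x13) (x14)))) (v (h (x21) (h (w) (h (x) (x24)))) (v (h (x31) (h (y) (h (z) (x34)))) (h (x41) (h (x42) (h (x43) (x44)))))) := by simp only [grid4, hrow, hassoc, vassoc]
    _ = v (v (h (x11) (h (x12) (h (x13) (x14)))) (h (h (x21) (w)) (h (x) (x24)))) (v (h (x31) (h (y) (h (z) (x34)))) (h (x41) (h (x42) (h (x43) (x44))))) := by simp only [hassoc, vassoc]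
    _ = v (h (v (x11) (h (x21) (w))) (v (h (x12) (h (x13) (x14))) (h (x) (x24)))) (v (h (x31) (h (y) (h (z) (x34)))) (h (x41) (h (x42) (h (x43) (x44))))) := by rw [interchange (x11) (h (x12) (h (x13) (x14))) (h (x21) (w)) (h (x) (x24))]
    _ = v (v (h (v (x11) (h (x21) (w))) (v (h (x12) (h (x13) (x14))) (h (x) (x24)))) (h (h (x31) (h (y) (z))) (x34))) (h (x41) (h (x42) (h (x43) (x44)))) := by simp only [hassoc, vassoc]
    _ = v (h (v (v (x11) (h (x21) (w))) (h (x31) (h (y) (z)))) (v (v (h (x12) (h (x13) (x14))) (h (x) (x24))) (x34))) (h (x41) (h (x42) (h (x43) (x44)))) := by rw [interchange (v (x11) (h (x21) (w))) (v (h (x12) (h (x13) (x14))) (h (x) (x24))) (h (x31) (h (y) (z))) (x34)]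
    _ = v (h (v (v (x11) (h (x21) (w))) (h (x31) (h (y) (z)))) (v (h (x12) (h (x13) (x14))) (v (h (x) (x24)) (x34)))) (h (x41) (h (x42) (h (x43) (x44)))) := by simp only [hassoc, vassoc]
    _ = v (v (h (v (x11) (h (x21) (w))) (h (x12) (h (x13) (x14)))) (h (h (x31) (h (y) (z))) (v (h (x) (x24)) (x34)))) (h (x41) (h (x42) (h (x43) (x44)))) := by rw [← interchange (v (x11) (h (x21) (w))) (h (x12) (h (x13) (x14))) (h (x31) (h (y) (z))) (v (h (x) (x24)) (x34))]
    _ = v (v (h (h (v (x11) (h (x21) (w))) (x12)) (h (x13) (x14))) (h (h (x31) (y)) (h (z) (v (h (x) (x24)) (x34))))) (h (x41) (h (x42) (h (x43) (x44)))) := by simp only [hassoc, vassoc]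
    _ = v (h (v (h (v (x11) (h (x21) (w))) (x12)) (h (x31) (y))) (v (h (x13) (x14)) (h (z) (v (h (x) (x24)) (x34))))) (h (x41) (h (x42) (h (x43) (x44)))) := by rw [interchange (h (v (x11) (h (x21) (w))) (x12)) (h (x13) (x14)) (h (x31) (y)) (h (z) (v (h (x) (x24)) (x34)))]
    _ = v (h (v (h (v (x11) (h (x21) (w))) (x12)) (h (x31) (y))) (v (h (x13) (x14)) (h (z) (v (h (x) (x24)) (x34))))) (h (x41) (h (x42) (h (x43) (x44)))) := by simp only [hassoc, vassoc]
    _ = h (v (v (h (v (x11) (h (x21) (w))) (x12)) (h (x31) (y))) (x41)) (v (v (h (x13) (x14)) (h (z) (v (h (x) (x24)) (x34)))) (h (x42) (h (x43) (x44)))) := by rw [interchange (v (h (v (x11) (h (x21) (w))) (x12)) (h (x31) (y))) (v (h (x13) (x14)) (h (z) (v (h (x) (x24)) (x34)))) (x41) (h (x42) (h (x43) (x44)))]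
    _ = h (v (h (v (x11) (h (x21) (w))) (x12)) (v (h (x31) (y)) (x41))) (v (h (x13) (x14)) (v (h (z) (v (h (x) (x24)) (x34))) (h (x42) (h (x43) (x44))))) := by simp only [hassoc, vassoc]
    _ = h (v (h (v (x11) (h (x21) (w))) (x12)) (v (h (x31) (y)) (x41))) (v (h (x13) (x14)) (h (v (z) (x42)) (v (v (h (x) (x24)) (x34)) (h (x43) (x44))))) := by rw [interchange (z) (v (h (x) (x24)) (x34)) (x42) (h (x43) (x44))]
    _ = h (v (h (v (x11) (h (x21) (w))) (x12)) (v (h (x31) (y)) (x41))) (v (h (x13) (x14)) (h (v (z) (x42)) (v (h (x) (x24)) (v (x34) (h (x43) (x44)))))) := by simp only [hassoc, vassoc]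
    _ = h (v (h (v (x11) (h (x21) (w))) (x12)) (v (h (x31) (y)) (x41))) (v (h (x13) (x14)) (v (h (z) (h (x) (x24))) (h (x42) (v (x34) (h (x43) (x44)))))) := by rw [← interchange (z) (h (x) (x24)) (x42) (v (x34) (h (x43) (x44)))]
    _ = h (v (h (v (x11) (h (x21) (w))) (x12)) (v (h (x31) (y)) (x41))) (v (h (x13) (x14)) (v (h (h (z) (x)) (x24)) (h (x42) (v (x34) (h (x43) (x44)))))) := by simp only [hassoc, vassoc]
    _ = h (v (h (v (x11) (h (x21) (w))) (x12)) (v (h (x31) (y)) (x41))) (v (h (x13) (x14)) (h (v (h (z) (x)) (x42)) (v (x24) (v (x34) (h (x43) (x44)))))) := by rw [interchange (h (z) (x)) (x24) (x42) (v (x34) (h (x43) (x44)))]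
    _ = h (v (v (h (v (x11) (h (x21) (w))) (x12)) (h (x31) (y))) (x41)) (v (h (x13) (x14)) (h (v (h (z) (x)) (x42)) (v (x24) (v (x34) (h (x43) (x44)))))) := by simp only [hassoc, vassoc]
    _ = v (h (v (h (v (x11) (h (x21) (w))) (x12)) (h (x31) (y))) (h (x13) (x14))) (h (x41) (h (v (h (z) (x)) (x42)) (v (x24) (v (x34) (h (x43) (x44)))))) := by rw [← interchange (v (h (v (x11) (h (x21) (w))) (x12)) (h (x31) (y))) (h (x13) (x14)) (x41) (h (v (h (z) (x)) (x42)) (v (x24) (v (x34) (h (x43) (x44)))))]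
    _ = v (h (v (h (v (x11) (h (x21) (w))) (x12)) (h (x31) (y))) (h (x13) (x14))) (h (h (x41) (v (h (z) (x)) (x42))) (v (x24) (v (x34) (h (x43) (x44))))) := by simp only [hassoc, vassoc]
    _ = h (v (v (h (v (x11) (h (x21) (w))) (x12)) (h (x31) (y))) (h (x41) (v (h (z) (x)) (x42)))) (v (h (x13) (x14)) (v (x24) (v (x34) (h (x43) (x44))))) := by rw [interchange (v (h (v (x11) (h (x21) (w))) (x12)) (h (x31) (y))) (h (x13) (x14)) (h (x41) (v (h (z) (x)) (x42))) (v (x24) (v (x34) (h (x43) (x44))))]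
    _ = h (v (h (v (x11) (h (x21) (w))) (x12)) (v (h (x31) (y)) (h (x41) (v (h (z) (x)) (x42))))) (v (h (x13) (x14)) (v (x24) (v (x34) (h (x43) (x44))))) := by simp only [hassoc, vassoc]
    _ = h (v (h (v (x11) (h (x21) (w))) (x12)) (h (v (x31) (x41)) (v (y) (v (h (z) (x)) (x42))))) (v (h (x13) (x14)) (v (x24) (v (x34) (h (x43) (x44))))) := by rw [interchange (x31) (y) (x41) (v (h (z) (x)) (x42))]
    _ = h (v (h (v (x11) (h (x21) (w))) (x12)) (h (v (x31) (x41)) (v (v (y) (h (z) (x))) (x42)))) (v (h (x13) (x14)) (v (x24) (v (x34) (h (x43) (x44))))) := by simp only [hassoc, vassoc]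
    _ = h (v (h (v (x11) (h (x21) (w))) (x12)) (v (h (x31) (v (y) (h (z) (x)))) (h (x41) (x42)))) (v (h (x13) (x14)) (v (x24) (v (x34) (h (x43) (x44))))) := by rw [← interchange (x31) (v (y) (h (z) (x))) (x41) (x42)]
    _ = h (v (v (h (v (x11) (h (x21) (w))) (x12)) (h (x31) (v (y) (h (z) (x))))) (h (x41) (x42))) (v (v (h (x13) (x14)) (v (x24) (x34))) (h (x43) (x44))) := by simp only [hassoc, vassoc]
    _ = v (h (v (h (v (x11) (h (x21) (w))) (x12)) (h (x31) (v (y) (h (z) (x))))) (v (h (x13) (x14)) (v (x24) (x34)))) (h (h (x41) (x42)) (h (x43) (x44))) := by rw [← interchange (v (h (v (x11) (h (x21) (w))) (x12)) (h (x31) (v (y) (h (z) (x))))) (v (h (x13) (x14)) (v (x24) (x34))) (h (x41) (x42)) (h (x43) (x44))]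
    _ = v (h (v (h (v (x11) (h (x21) (w))) (x12)) (h (x31) (v (y) (h (z) (x))))) (v (h (x13) (x14)) (v (x24) (x34)))) (h (x41) (h (x42) (h (x43) (x44)))) := by simp only [hassoc, vassoc]
    _ = v (h (h (v (v (x11) (h (x21) (w))) (x31)) (v (x12) (v (y) (h (z) (x))))) (v (h (x13) (x14)) (v (x24) (x34)))) (h (x41) (h (x42) (h (x43) (x44)))) := by rw [interchange (v (x11) (h (x21) (w))) (x12) (x31) (v (y) (h (z) (x)))]
    _ = v (h (v (x11) (v (h (x21) (w)) (x31))) (h (v (v (x12) (y)) (h (z) (x))) (v (v (h (x13) (x14)) (x24)) (x34)))) (h (x41) (h (x42) (h (x43) (x44)))) := by simp only [hassoc, vassoc]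
    _ = v (h (v (x11) (v (h (x21) (w)) (x31))) (v (h (v (x12) (y)) (v (h (x13) (x14)) (x24))) (h (h (z) (x)) (x34)))) (h (x41) (h (x42) (h (x43) (x44)))) := by rw [← interchange (v (x12) (y)) (v (h (x13) (x14)) (x24)) (h (z) (x)) (x34)]
    _ = v (h (v (v (x11) (h (x21) (w))) (x31)) (v (h (v (x12) (y)) (v (h (x13) (x14)) (x24))) (h (z) (h (x) (x34))))) (h (x41) (h (x42) (h (x43) (x44)))) := by simp only [hassoc, vassoc]
    _ = v (v (h (v (x11) (h (x21) (w))) (h (v (x12) (y)) (v (h (x13) (x14)) (x24)))) (h (x31) (h (z) (h (x) (x34))))) (h (x41) (h (x42) (h (x43) (x44)))) := by rw [← interchange (v (x11) (h (x21) (w))) (h (v (x12) (y)) (v (h (x13) (x14)) (x24))) (x31) (h (z) (h (x) (x34)))]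
    _ = v (h (v (x11) (h (x21) (w))) (h (v (x12) (y)) (v (h (x13) (x14)) (x24)))) (v (h (x31) (h (z) (h (x) (x34)))) (h (x41) (h (x42) (h (x43) (x44))))) := by simp only [hassoc, vassoc]
    _ = v (h (v (x11) (h (x21) (w))) (v (h (x12) (h (x13) (x14))) (h (y) (x24)))) (v (h (x31) (h (z) (h (x) (x34)))) (h (x41) (h (x42) (h (x43) (x44))))) := by rw [← interchange (x12) (h (x13) (x14)) (y) (x24)]
    _ = v (h (v (x11) (h (x21) (w))) (v (h (x12) (h (x13) (x14))) (h (y) (x24)))) (v (h (x31) (h (z) (h (x) (x34)))) (h (x41) (h (x42) (h (x43) (x44))))) := by simp only [hassoc, vassoc]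
    _ = v (v (h (x11) (h (x12) (h (x13) (x14)))) (h (h (x21) (w)) (h (y) (x24)))) (v (h (x31) (h (z) (h (x) (x34)))) (h (x41) (h (x42) (h (x43) (x44))))) := by rw [← interchange (x11) (h (x12) (h (x13) (x14))) (h (x21) (w)) (h (y) (x24))]
    _ = v (h (x11) (h (x12) (h (x13) (x14)))) (v (h (x21) (h (w) (h (y) (x24)))) (v (h (x31) (h (z) (h (x) (x34)))) (h (x41) (h (x42) (h (x43) (x44)))))) := by simp only [hassoc, vassoc]
    _ = grid4 v (hrow h x11 x12 x13 x14) (hrow h x21 w y x24) (hrow h x31 z x x34) (hrow h x41 x42 x43 x44) := by simp only [grid4, hrow, hassoc, vassoc]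
end

section
/- Let S be a double semigroup. For any sixteen elements of S arranged in a 4×4 grid, with a in position (row 2, column 2) and b in position (row 3, column 2), the 4×4 grid product is unchanged when a and b are interchanged (all other fourteen entries kept fixed, in the same positions). -/
/-- In a double semigroup, swapping the entries in positions (2,2) and (3,2)
of a 4×4 grid does not change the grid product. -/
theorem grid_swap_22_32 {S : Type*} (h v : S → S → S)
    (hassoc : ∀ x y z : S, h (h x y) z = h x (h y z))
    (vassoc : ∀ x y z : S, v (v x y) z = v x (v y z))
    (interchange : ∀ x y z w : S, v (h x y) (h z w) = h (v x z) (v y w))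
    (x11 x12 x13 x14 x21 x23 x24 x31 x33 x34 x41 x42 x43 x44 a b : S) :
    grid4 v (hrow h x11 x12 x13 x14) (hrow h x21 a x23 x24)
            (hrow h x31 b x33 x34) (hrow h x41 x42 x43 x44)
    = grid4 v (hrow h x11 x12 x13 x14) (hrow h x21 b x23 x24)
              (hrow h x31 a x33 x34) (hrow h x41 x42 x43 x44) := by
  have key : (v (h x11 (h x12 (h x13 x14))) (v (h x21 (h a (h x23 x24))) (v (h x31 (h b (h x33 x34))) (h x41 (h x42 (h x43 x44)))))) = (v (h x11 (h x12 (h x13 x14))) (v (h x21 (h b (h x23 x24))) (v (h x31 (h a (h x33 x34))) (h x41 (h x42 (h x43 x44)))))) := by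
    calc (v (h x11 (h x12 (h x13 x14))) (v (h x21 (h a (h x23 x24))) (v (h x31 (h b (h x33 x34))) (h x41 (h x42 (h x43 x44))))))
      _ = (v (v (h x11 (h x12 (h x13 x14))) (h (h x21 a) (h x23 x24))) (v (h x31 (h b (h x33 x34))) (h x41 (h x42 (h x43 x44))))) := by simp only [hassoc, vassoc]
      _ = (v (h (v x11 (h x21 a)) (v (h x12 (h x13 x14)) (h x23 x24))) (v (h x31 (h b (h x33 x34))) (h x41 (h x42 (h x43 x44))))) := by rw [interchange x11 (h x12 (h x13 x14)) (h x21 a) (h x23 x24)]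
      _ = (v (v (h (v x11 (h x21 a)) (v (h x12 (h x13 x14)) (h x23 x24))) (h (h x31 b) (h x33 x34))) (h x41 (h x42 (h x43 x44)))) := by simp only [hassoc, vassoc]
      _ = (v (h (v (v x11 (h x21 a)) (h x31 b)) (v (v (h x12 (h x13 x14)) (h x23 x24)) (h x33 x34))) (h x41 (h x42 (h x43 x44)))) := by rw [interchange (v x11 (h x21 a)) (v (h x12 (h x13 x14)) (h x23 x24)) (h x31 b) (h x33 x34)]
      _ = (v (h (v x11 (v (h x21 a) (h x31 b))) (v (h x12 (h x13 x14)) (v (h x23 x24) (h x33 x34)))) (h x41 (h x42 (h x43 x44)))) := by simp only [hassoc, vassoc]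
      _ = (h (v (v x11 (v (h x21 a) (h x31 b))) x41) (v (v (h x12 (h x13 x14)) (v (h x23 x24) (h x33 x34))) (h x42 (h x43 x44)))) := by rw [interchange (v x11 (v (h x21 a) (h x31 b))) (v (h x12 (h x13 x14)) (v (h x23 x24) (h x33 x34))) x41 (h x42 (h x43 x44))]
      _ = (h (v (v x11 (h x21 a)) (v (h x31 b) x41)) (v (h x12 (h x13 x14)) (v (h x23 x24) (v (h x33 x34) (h x42 (h x43 x44)))))) := by simp only [hassoc, vassoc]
      _ = (v (h (v x11 (h x21 a)) (h x12 (h x13 x14))) (h (v (h x31 b) x41) (v (h x23 x24) (v (h x33 x34) (h x42 (h x43 x44)))))) := by rw [← interchange (v x11 (h x21 a)) (h x12 (h x13 x14)) (v (h x31 b) x41) (v (h x23 x24) (v (h x33 x34) (h x42 (h x43 x44))))]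
      _ = (v (h (v x11 (h x21 a)) (h x12 (h x13 x14))) (h (v (h x31 b) x41) (v (h x23 x24) (v (h x33 x34) (h x42 (h x43 x44)))))) := by simp only [hassoc, vassoc]
      _ = (v (h (v x11 (h x21 a)) (h x12 (h x13 x14))) (v (h (h x31 b) (h x23 x24)) (h x41 (v (h x33 x34) (h x42 (h x43 x44)))))) := by rw [← interchange (h x31 b) (h x23 x24) x41 (v (h x33 x34) (h x42 (h x43 x44)))]
      _ = (v (v (h (v x11 (h x21 a)) (h x12 (h x13 x14))) (h x31 (h b (h x23 x24)))) (h x41 (v (h x33 x34) (h x42 (h x43 x44))))) := by simp only [hassoc, vassoc]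
      _ = (v (h (v (v x11 (h x21 a)) x31) (v (h x12 (h x13 x14)) (h b (h x23 x24)))) (h x41 (v (h x33 x34) (h x42 (h x43 x44))))) := by rw [interchange (v x11 (h x21 a)) (h x12 (h x13 x14)) x31 (h b (h x23 x24))]
      _ = (v (h (v x11 (v (h x21 a) x31)) (v (h x12 (h x13 x14)) (h b (h x23 x24)))) (h x41 (v (h x33 x34) (h x42 (h x43 x44))))) := by simp only [hassoc, vassoc]
      _ = (h (v (v x11 (v (h x21 a) x31)) x41) (v (v (h x12 (h x13 x14)) (h b (h x23 x24))) (v (h x33 x34) (h x42 (h x43 x44))))) := by rw [interchange (v x11 (v (h x21 a) x31)) (v (h x12 (h x13 x14)) (h b (h x23 x24))) x41 (v (h x33 x34) (h x42 (h x43 x44)))]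
      _ = (h (v (v x11 (h x21 a)) (v x31 x41)) (v (v (h x12 (h x13 x14)) (v (h b (h x23 x24)) (h x33 x34))) (h x42 (h x43 x44)))) := by simp only [hassoc, vassoc]
      _ = (v (h (v x11 (h x21 a)) (v (h x12 (h x13 x14)) (v (h b (h x23 x24)) (h x33 x34)))) (h (v x31 x41) (h x42 (h x43 x44)))) := by rw [← interchange (v x11 (h x21 a)) (v (h x12 (h x13 x14)) (v (h b (h x23 x24)) (h x33 x34))) (v x31 x41) (h x42 (h x43 x44))]
      _ = (v (h (v x11 (h x21 a)) (v (v (h x12 (h x13 x14)) (h b (h x23 x24))) (h x33 x34))) (h (v x31 x41) (h x42 (h x43 x44)))) := by simp only [hassoc, vassoc]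
      _ = (v (v (h x11 (v (h x12 (h x13 x14)) (h b (h x23 x24)))) (h (h x21 a) (h x33 x34))) (h (v x31 x41) (h x42 (h x43 x44)))) := by rw [← interchange x11 (v (h x12 (h x13 x14)) (h b (h x23 x24))) (h x21 a) (h x33 x34)]
      _ = (v (h x11 (v (h x12 (h x13 x14)) (h b (h x23 x24)))) (v (h x21 (h a (h x33 x34))) (h (v x31 x41) (h x42 (h x43 x44))))) := by simp only [hassoc, vassoc]
      _ = (v (h x11 (v (h x12 (h x13 x14)) (h b (h x23 x24)))) (h (v x21 (v x31 x41)) (v (h a (h x33 x34)) (h x42 (h x43 x44))))) := by rw [interchange x21 (h a (h x33 x34)) (v x31 x41) (h x42 (h x43 x44))]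
      _ = (v (h x11 (v (h x12 (h x13 x14)) (h b (h x23 x24)))) (h (v x21 (v x31 x41)) (v (h a (h x33 x34)) (h x42 (h x43 x44))))) := by simp only [hassoc, vassoc]
      _ = (h (v x11 (v x21 (v x31 x41))) (v (v (h x12 (h x13 x14)) (h b (h x23 x24))) (v (h a (h x33 x34)) (h x42 (h x43 x44))))) := by rw [interchange x11 (v (h x12 (h x13 x14)) (h b (h x23 x24))) (v x21 (v x31 x41)) (v (h a (h x33 x34)) (h x42 (h x43 x44)))]
      _ = (h (v (v x11 (v x21 x31)) x41) (v (v (h x12 (h x13 x14)) (v (h b (h x23 x24)) (h a (h x33 x34)))) (h x42 (h x43 x44)))) := by simp only [hassoc, vassoc]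
      _ = (v (h (v x11 (v x21 x31)) (v (h x12 (h x13 x14)) (v (h b (h x23 x24)) (h a (h x33 x34))))) (h x41 (h x42 (h x43 x44)))) := by rw [← interchange (v x11 (v x21 x31)) (v (h x12 (h x13 x14)) (v (h b (h x23 x24)) (h a (h x33 x34)))) x41 (h x42 (h x43 x44))]
      _ = (v (h (v (v x11 x21) x31) (v (v (h x12 (h x13 x14)) (h b (h x23 x24))) (h a (h x33 x34)))) (h x41 (h x42 (h x43 x44)))) := by simp only [hassoc, vassoc]
      _ = (v (v (h (v x11 x21) (v (h x12 (h x13 x14)) (h b (h x23 x24)))) (h x31 (h a (h x33 x34)))) (h x41 (h x42 (h x43 x44)))) := by rw [← interchange (v x11 x21) (v (h x12 (h x13 x14)) (h b (h x23 x24))) x31 (h a (h x33 x34))]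
      _ = (v (h (v x11 x21) (v (h x12 (h x13 x14)) (h b (h x23 x24)))) (v (h x31 (h a (h x33 x34))) (h x41 (h x42 (h x43 x44))))) := by simp only [hassoc, vassoc]
      _ = (v (v (h x11 (h x12 (h x13 x14))) (h x21 (h b (h x23 x24)))) (v (h x31 (h a (h x33 x34))) (h x41 (h x42 (h x43 x44))))) := by rw [← interchange x11 (h x12 (h x13 x14)) x21 (h b (h x23 x24))]
      _ = (v (h x11 (h x12 (h x13 x14))) (v (h x21 (h b (h x23 x24))) (v (h x31 (h a (h x33 x34))) (h x41 (h x42 (h x43 x44)))))) := by simp only [hassoc, vassoc]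
  simpa only [grid4, hrow, hassoc, vassoc] using key
end

section
/- Every cancellative double semigroup is commutative: if S is a double semigroup in which both operations *h and *v are left and right cancellative, then for all a, b in S one has a *h b = b *h a and a *v b = b *v a. -/
/-- Key lemma: in a double semigroup with right-cancellation,
`h (v x y) d = v (h x d) y`. -/
lemma double_semigroup_key {S : Type*} (h v : S → S → S)
    (hassoc : ∀ x y z : S, h (h x y) z = h x (h y z))
    (vassoc : ∀ x y z : S, v (v x y) z = v x (v y z))
    (interchange : ∀ x y z w : S, v (h x y) (h z w) = h (v x z) (v y w))
    (hcancel_right : ∀ x y c : S, h x c = h y c → x = y)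
    (vcancel_right : ∀ x y c : S, v x c = v y c → x = y) :
    ∀ x y d : S, h (v x y) d = v (h x d) y := by
  intro x y d
  set W : S := h (v d d) (v x y) with hW
  set C : S := h x W with hC
  have chain : v (h (v x y) (h d y)) C = v (h (v (h x d) y) y) C := by
    calc v (h (v x y) (h d y)) C
        = h (v (v x y) x) (v (h d y) W) := interchange _ _ _ _
      _ = h (v x (v y x)) (v (h d y) W) := by rw [vassoc]
      _ = v (h x (h d y)) (h (v y x) W) := (interchange _ _ _ _).symm
      _ = v (h (h x d) y) (h (v y x) W) := by rw [hassoc]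
      _ = h (v (h x d) (v y x)) (v y W) := interchange _ _ _ _
      _ = h (v (v (h x d) y) x) (v y W) := by rw [vassoc]
      _ = v (h (v (h x d) y) y) C := (interchange _ _ _ _).symm
  have step1 : h (v x y) (h d y) = h (v (h x d) y) y :=
    vcancel_right _ _ _ chain
  have step2 : h (h (v x y) d) y = h (v (h x d) y) y := by
    rw [hassoc]; exact step1
  exact hcancel_right _ _ _ step2

/-- Every cancellative double semigroup is commutative. -/
theorem cancellative_double_semigroup_comm {S : Type*} (h v : S → S → S)
    (hassoc : ∀ x y z : S, h (h x y) z = h x (h y z))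
    (vassoc : ∀ x y z : S, v (v x y) z = v x (v y z))
    (interchange : ∀ x y z w : S, v (h x y) (h z w) = h (v x z) (v y w))
    (hcancel_right : ∀ x y c : S, h x c = h y c → x = y)
    (hcancel_left : ∀ x y c : S, h c x = h c y → x = y)
    (vcancel_right : ∀ x y c : S, v x c = v y c → x = y)
    (vcancel_left : ∀ x y c : S, v c x = v c y → x = y) :
    ∀ a b : S, h a b = h b a ∧ v a b = v b a := by
  -- Lemma L : h (v x y) d = v (h x d) y
  have L : ∀ x y d : S, h (v x y) d = v (h x d) y :=
    double_semigroup_key h v hassoc vassoc interchange hcancel_right vcancel_right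
  -- Lemma L3 : v y (h x d) = h (v y x) d  (apply L with v flipped)
  have L3 : ∀ x y d : S, v y (h x d) = h (v y x) d := by
    have := double_semigroup_key h (fun a b => v b a)
      hassoc
      (fun x y z => (vassoc z y x).symm)
      (fun x y z w => interchange z w x y)
      hcancel_right
      (fun x y c hx => vcancel_left x y c hx)
    intro x y d
    exact (this x y d).symm
  -- cleanup: L3 as stated
  have L3' : ∀ x y d : S, v y (h x d) = h (v y x) d := L3
  -- v a c = h c a for all a c
  have vh : ∀ a c : S, v a c = h c a := by
    intro a c
    have e1 : v (h a a) (h a c) = h (v a a) (v a c) := interchange _ _ _ _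
    have e2 : v (h a a) (h a c) = h (h (v a a) c) a := by
      rw [← L a (h a c) a, L3' a a c]
    have e3 : h (v a a) (v a c) = h (v a a) (h c a) := by
      rw [← e1, e2, hassoc]
    exact hcancel_left _ _ _ e3
  -- h is commutative
  have hcomm : ∀ a b : S, h a b = h b a := by
    intro a b
    have e : h (h a b) (h a b) = h (h a a) (h b b) := by
      have := interchange a b a b
      rw [vh (h a b) (h a b), vh a a, vh b b] at this
      exact this
    have e2 : h a (h b (h a b)) = h a (h a (h b b)) := by
      rw [← hassoc a b (h a b), ← hassoc a a (h b b)]; exact e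
    have e3 : h b (h a b) = h a (h b b) := hcancel_left _ _ _ e2
    have e4 : h (h b a) b = h (h a b) b := by rw [hassoc, hassoc]; exact e3
    exact (hcancel_right _ _ _ e4).symm
  intro a b
  refine ⟨hcomm a b, ?_⟩
  rw [vh a b, vh b a, hcomm]
end

section
/- Let S be a double semigroup and suppose there exists an element c of S such that every element of the closure of {c} under both operations *h and *v (i.e., every element obtainable from copies of c by repeated horizontal and vertical multiplication) is cancellable on all four sides: for each operation * in {*h, *v}, each such element d, and all x, y in S, x * d = y * d implies x = y and d * x = d * y implies x = y. Then S is commutative: for all a, b in S, a *h b = b *h a and a *v b = b *v a. -/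
/-- The closure of `{c}` under the two operations `h` and `v`: all elements
obtainable from copies of `c` by repeated horizontal and vertical multiplication. -/
inductive DoubleClosure {S : Type*} (h v : S → S → S) (c : S) : S → Prop
  | base : DoubleClosure h v c c
  | hmul {x y : S} : DoubleClosure h v c x → DoubleClosure h v c y →
      DoubleClosure h v c (h x y)
  | vmul {x y : S} : DoubleClosure h v c x → DoubleClosure h v c y →
      DoubleClosure h v c (v x y)

private lemma DoubleClosure.swap {S : Type*} {h v : S → S → S} {c d : S}
    (hd : DoubleClosure v h c d) : DoubleClosure h v c d := by
  induction hd with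
  | base => exact .base
  | hmul _ _ ih1 ih2 => exact .vmul ih1 ih2
  | vmul _ _ ih1 ih2 => exact .hmul ih1 ih2

private lemma key {S : Type*} (h v : S → S → S)
    (hassoc : ∀ x y z : S, h (h x y) z = h x (h y z))
    (vassoc : ∀ x y z : S, v (v x y) z = v x (v y z))
    (interchange : ∀ x y z w : S, v (h x y) (h z w) = h (v x z) (v y w))
    (c : S)
    (cancel : ∀ d : S, DoubleClosure h v c d →
      (∀ x y : S, h x d = h y d → x = y) ∧
      (∀ x y : S, h d x = h d y → x = y) ∧
      (∀ x y : S, v x d = v y d → x = y) ∧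
      (∀ x y : S, v d x = v d y → x = y)) :
    ∀ a b : S, h a b = h b a := by
  intro a b
  have clP : DoubleClosure h v c (v (h c c) (h (v c c) c)) :=
    .vmul (.hmul .base .base) (.hmul (.vmul .base .base) .base)
  have clQ : DoubleClosure h v c (h c c) := .hmul .base .base
  have big : (h (v (h c c) (h (v c c) c)) (v (h c c) (v (h (h a b) c) (h c c)))) = (h (v (h c c) (h (v c c) c)) (v (h c c) (v (h (h b a) c) (h c c)))) :=
    ((((((((((((((((((((((interchange (h c c) (h c c) (h (v c c) c) (v (h (h a b) c) (h c c))).symm).trans (congrArg (fun z => v (h (h c c) (h c c)) z) (congrArg (fun z => h (h (v c c) c) z) (congrArg (fun z => v z (h c c)) (hassoc a b c))))).trans (congrArg (fun z => v (h (h c c) (h c c)) z) (congrArg (fun z => h (h (v c c) c) z) (interchange a (h b c) c c)))).trans (congrArg (fun z => v (h (h c c) (h c c)) z) ((hassoc (h (v c c) c) (v a c) (v (h b c) c)).symm))).trans (interchange (h c c) (h c c) (h (h (v c c) c) (v a c)) (v (h b c) c))).trans (congrArg (fun z => h (v (h c c) (h (h (v c c) c) (v a c))) z) ((vassoc (h c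 c) (h b c) c).symm))).trans ((interchange (h c c) (v (h c c) (h b c)) (h (h (v c c) c) (v a c)) c).symm)).trans (congrArg (fun z => v z (h (h (h (v c c) c) (v a c)) c)) (congrArg (fun z => h (h c c) z) (interchange c c b c)))).trans (congrArg (fun z => v z (h (h (h (v c c) c) (v a c)) c)) ((hassoc (h c c) (v c b) (v c c)).symm))).trans (interchange (h (h c c) (v c b)) (v c c) (h (h (v c c) c) (v a c)) c)).trans (congrArg (fun z => h (v (h (h c c) (v c b)) (h (h (v c c) c) (v a c))) z) (vassoc c c c))).trans ((interchange (h (h c c) (v c b)) c (h (h (v c c) c) (v a c)) (v c c)).symm)).trans (congrArg (fun z => v (h (h (h c c) (v c b)) c) z) (hassoc (h (v c c) c) (v a c) (v c c)))).trans (interchange (h (h c c) (v c b)) c (h (v c c) c) (h (v a c) (v c c)))).trans (congrArg (fun z => h (v (h (h c c) (v c b)) (h (v c c) c)) z) (congrArg (fun z => v c z) ((interchange a c c c).symm)))).trans (congrArg (fun z => h (v (h (h c c) (v c b)) (h (v c c) c)) z) ((vassoc c (h a c) (h c c)).symm))).trans ((interchange (h (h c c) (v c b)) (v c (h a c)) (h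 (v c c) c) (h c c)).symm)).trans (congrArg (fun z => v z (h (h (v c c) c) (h c c))) (hassoc (h c c) (v c b) (v c (h a c))))).trans (interchange (h c c) (h (v c b) (v c (h a c))) (h (v c c) c) (h c c))).trans (congrArg (fun z => h (v (h c c) (h (v c c) c)) z) (congrArg (fun z => v z (h c c)) ((interchange c c b (h a c)).symm)))).trans (congrArg (fun z => h (v (h c c) (h (v c c) c)) z) (vassoc (h c c) (h b (h a c)) (h c c)))).trans (congrArg (fun z => h (v (h c c) (h (v c c) c)) z) (congrArg (fun z => v (h c c) z) (congrArg (fun z => v z (h c c)) ((hassoc b a c).symm))))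
  have s1 := (cancel _ clP).2.1 _ _ big
  have s2 := (cancel _ clQ).2.2.2 _ _ s1
  have s3 := (cancel _ clQ).2.2.1 _ _ s2
  exact (cancel _ .base).1 _ _ s3

/-- If a double semigroup has an element `c` all of whose iterated products
(in both directions) are cancellable on all four sides, then the double
semigroup is commutative. -/
theorem double_semigroup_comm_of_cancellable_element {S : Type*} (h v : S → S → S)
    (hassoc : ∀ x y z : S, h (h x y) z = h x (h y z))
    (vassoc : ∀ x y z : S, v (v x y) z = v x (v y z))
    (interchange : ∀ x y z w : S, v (h x y) (h z w) = h (v x z) (v y w))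
    (c : S)
    (cancel : ∀ d : S, DoubleClosure h v c d →
      (∀ x y : S, h x d = h y d → x = y) ∧
      (∀ x y : S, h d x = h d y → x = y) ∧
      (∀ x y : S, v x d = v y d → x = y) ∧
      (∀ x y : S, v d x = v d y → x = y)) :
    ∀ a b : S, h a b = h b a ∧ v a b = v b a := by
  intro a b
  refine ⟨key h v hassoc vassoc interchange c cancel a b, ?_⟩
  refine key v h vassoc hassoc (fun x y z w => (interchange x z y w).symm) c ?_ a b
  intro d hd
  obtain ⟨c1, c2, c3, c4⟩ := cancel d hd.swap
  exact ⟨c3, c4, c1, c2⟩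
end

section
/- In an inverse double semigroup, the horizontal and vertical inverse operations commute: for every element a, σ(a⁻¹) = σ(a)⁻¹, i.e. the vertical inverse of the horizontal inverse of a equals the horizontal inverse of the vertical inverse of a. -/
/-- In an inverse double semigroup the horizontal and vertical inverse operations commute: σ(a⁻¹) = σ(a)⁻¹. -/
theorem inverse_ops_commute {S : Type*} (h v : S → S → S)
    (hassoc : ∀ x y z : S, h (h x y) z = h x (h y z))
    (vassoc : ∀ x y z : S, v (v x y) z = v x (v y z))
    (interchange : ∀ x y z w : S, v (h x y) (h z w) = h (v x z) (v y w))
    (hinv vinv : S → S)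
    (hinv_spec : ∀ x : S, h (h x (hinv x)) x = x ∧ h (h (hinv x) x) (hinv x) = hinv x)
    (hinv_unique : ∀ x y : S, h (h x y) x = x → h (h y x) y = y → y = hinv x)
    (vinv_spec : ∀ x : S, v (v x (vinv x)) x = x ∧ v (v (vinv x) x) (vinv x) = vinv x)
    (vinv_unique : ∀ x y : S, v (v x y) x = x → v (v y x) y = y → y = vinv x) :
    ∀ a : S, vinv (hinv a) = hinv (vinv a) := by
  have key : ∀ x y : S, v (hinv x) (hinv y) = hinv (v x y) := by
    intro x y
    apply hinv_unique
    · rw [← interchange, ← interchange, (hinv_spec x).1, (hinv_spec y).1]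
    · rw [← interchange, ← interchange, (hinv_spec x).2, (hinv_spec y).2]
  intro a
  symm
  apply vinv_unique
  · rw [key, key, (vinv_spec a).1]
  · rw [key, key, (vinv_spec a).2]
end

section
/- In an inverse double semigroup, for every element a one has a *v (σ(a) *h σ(a⁻¹) *h σ(a)) *v a = a, where the vertical product is taken in the indicated order. -/
/-- a *v (σ(a) *h σ(a⁻¹) *h σ(a)) *v a = a. -/
theorem middle_sandwich_left {S : Type*} (h v : S → S → S)
    (hassoc : ∀ x y z : S, h (h x y) z = h x (h y z))
    (vassoc : ∀ x y z : S, v (v x y) z = v x (v y z))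
    (interchange : ∀ x y z w : S, v (h x y) (h z w) = h (v x z) (v y w))
    (hinv vinv : S → S)
    (hinv_spec : ∀ x : S, h (h x (hinv x)) x = x ∧ h (h (hinv x) x) (hinv x) = hinv x)
    (hinv_unique : ∀ x y : S, h (h x y) x = x → h (h y x) y = y → y = hinv x)
    (vinv_spec : ∀ x : S, v (v x (vinv x)) x = x ∧ v (v (vinv x) x) (vinv x) = vinv x)
    (vinv_unique : ∀ x y : S, v (v x y) x = x → v (v y x) y = y → y = vinv x) :
    ∀ a : S, v (v a (h (h (vinv a) (vinv (hinv a))) (vinv a))) a = a := by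
  intro a
  have hom : ∀ x y : S, h (vinv x) (vinv y) = vinv (h x y) := by
    intro x y
    apply vinv_unique
    · rw [interchange, interchange, (vinv_spec x).1, (vinv_spec y).1]
    · rw [interchange, interchange, (vinv_spec x).2, (vinv_spec y).2]
  rw [hom, hom, (hinv_spec a).1, (vinv_spec a).1]
end

section
/- In an inverse double semigroup, for every element a one has (σ(a) *h σ(a⁻¹) *h σ(a)) *v a *v (σ(a) *h σ(a⁻¹) *h σ(a)) = σ(a) *h σ(a⁻¹) *h σ(a), where the vertical product is taken in the indicated order. -/
/-- (σ(a) *h σ(a⁻¹) *h σ(a)) *v a *v (σ(a) *h σ(a⁻¹) *h σ(a)) = σ(a) *h σ(a⁻¹) *h σ(a). -/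
theorem middle_sandwich_right {S : Type*} (h v : S → S → S)
    (hassoc : ∀ x y z : S, h (h x y) z = h x (h y z))
    (vassoc : ∀ x y z : S, v (v x y) z = v x (v y z))
    (interchange : ∀ x y z w : S, v (h x y) (h z w) = h (v x z) (v y w))
    (hinv vinv : S → S)
    (hinv_spec : ∀ x : S, h (h x (hinv x)) x = x ∧ h (h (hinv x) x) (hinv x) = hinv x)
    (hinv_unique : ∀ x y : S, h (h x y) x = x → h (h y x) y = y → y = hinv x)
    (vinv_spec : ∀ x : S, v (v x (vinv x)) x = x ∧ v (v (vinv x) x) (vinv x) = vinv x)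
    (vinv_unique : ∀ x y : S, v (v x y) x = x → v (v y x) y = y → y = vinv x) :
    ∀ a : S, v (v (h (h (vinv a) (vinv (hinv a))) (vinv a)) a) (h (h (vinv a) (vinv (hinv a))) (vinv a)) = h (h (vinv a) (vinv (hinv a))) (vinv a) := by
  -- σ is a homomorphism with respect to *h
  have hom : ∀ x y : S, h (vinv x) (vinv y) = vinv (h x y) := by
    intro x y
    apply vinv_unique
    · rw [interchange, interchange, (vinv_spec x).1, (vinv_spec y).1]
    · rw [interchange, interchange, (vinv_spec x).2, (vinv_spec y).2]
  intro a
  have key : h (h (vinv a) (vinv (hinv a))) (vinv a) = vinv a := by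
    rw [hom, hom, (hinv_spec a).1]
  rw [key]
  exact (vinv_spec a).2
end

section
/- In an inverse double semigroup, for every element a one has σ(a) *h σ(a⁻¹) *h σ(a) = σ(a); equivalently, the element σ(a) *h σ(a⁻¹) *h σ(a) is the (unique) vertical inverse of a. -/
/-- σ(a) *h σ(a⁻¹) *h σ(a) = σ(a), i.e. this element is the vertical inverse of a. -/
theorem sigma_triple_eq_sigma {S : Type*} (h v : S → S → S)
    (hassoc : ∀ x y z : S, h (h x y) z = h x (h y z))
    (vassoc : ∀ x y z : S, v (v x y) z = v x (v y z))
    (interchange : ∀ x y z w : S, v (h x y) (h z w) = h (v x z) (v y w))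
    (hinv vinv : S → S)
    (hinv_spec : ∀ x : S, h (h x (hinv x)) x = x ∧ h (h (hinv x) x) (hinv x) = hinv x)
    (hinv_unique : ∀ x y : S, h (h x y) x = x → h (h y x) y = y → y = hinv x)
    (vinv_spec : ∀ x : S, v (v x (vinv x)) x = x ∧ v (v (vinv x) x) (vinv x) = vinv x)
    (vinv_unique : ∀ x y : S, v (v x y) x = x → v (v y x) y = y → y = vinv x) :
    ∀ a : S, h (h (vinv a) (vinv (hinv a))) (vinv a) = vinv a := by
  have i3 : ∀ x1 x2 x3 y1 y2 y3 : S,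
      v (h (h x1 x2) x3) (h (h y1 y2) y3)
        = h (h (v x1 y1) (v x2 y2)) (v x3 y3) := by
    intro x1 x2 x3 y1 y2 y3
    rw [interchange, interchange]
  have key : ∀ a b p q : S,
      h (h a b) a = a →
      v (v a p) a = a → v (v p a) p = p →
      v (v b q) b = b → v (v q b) q = q →
      v (v a (h (h p q) p)) a = a ∧
        v (v (h (h p q) p) a) (h (h p q) p) = h (h p q) p := by
    intro a b p q ha va1 va2 vb1 vb2
    constructor
    · conv_lhs => rw [← ha]
      rw [i3, i3, va1, vb1]
      exact ha
    · conv_lhs => rw [← ha]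
      rw [i3, i3, va2, vb2]
  intro a
  obtain ⟨k1, k2⟩ := key a (hinv a) (vinv a) (vinv (hinv a)) (hinv_spec a).1
    (vinv_spec a).1 (vinv_spec a).2 (vinv_spec (hinv a)).1 (vinv_spec (hinv a)).2
  exact vinv_unique a _ k1 k2
end

section
/- In an inverse double semigroup, for all elements a, b, writing A = σ(a) and B = σ(b), one has (A *h B *h A⁻¹ *h B⁻¹ *h A *h B) *v (a *h b) *v (A *h B *h A⁻¹ *h B⁻¹ *h A *h B) = A *h B *h A⁻¹ *h B⁻¹ *h A *h B, where the vertical product is taken in the indicated order. -/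
section DIS
variable {S : Type*}

/-- inverse is involutive -/
theorem ds_inv_invol (m : S → S → S) (i : S → S)
    (spec : ∀ x : S, m (m x (i x)) x = x ∧ m (m (i x) x) (i x) = i x)
    (uniq : ∀ x y : S, m (m x y) x = x → m (m y x) y = y → y = i x)
    (x : S) : i (i x) = x :=
  (uniq (i x) x (spec x).2 (spec x).1).symm

/-- inverse of an idempotent is itself -/
theorem ds_idem_inv (m : S → S → S) (i : S → S)
    (uniq : ∀ x y : S, m (m x y) x = x → m (m y x) y = y → y = i x)
    {e : S} (he : m e e = e) : i e = e :=
  (uniq e e (by rw [he, he]) (by rw [he, he])).symm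

/-- product of idempotents is idempotent -/
theorem ds_idem_mul (m : S → S → S) (i : S → S)
    (assoc : ∀ x y z : S, m (m x y) z = m x (m y z))
    (spec : ∀ x : S, m (m x (i x)) x = x ∧ m (m (i x) x) (i x) = i x)
    (uniq : ∀ x y : S, m (m x y) x = x → m (m y x) y = y → y = i x)
    {e f : S} (he : m e e = e) (hf : m f f = f) :
    m (m e f) (m e f) = m e f := by
  set P := m e f with hP
  set x := i P with hx
  set q := m (m f x) e with hq
  have ee : ∀ z, m e (m e z) = m e z := fun z => by rw [← assoc, he]
  have ffz : ∀ z, m f (m f z) = m f z := fun z => by rw [← assoc, hf]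
  have hPx : m e (m f (m x (m e f))) = m e f := by
    have h0 := (spec P).1
    simpa only [hP, assoc] using h0
  have hxPz : ∀ z, m x (m e (m f (m x z))) = m x z := fun z => by
    have h0 := congrArg (fun t => m t z) (spec P).2
    simpa only [hP, assoc] using h0
  have h2a : m (m P q) P = P := by
    show m (m (m e f) (m (m f x) e)) (m e f) = m e f
    simp only [assoc]
    rw [ee, ffz, hPx]
  have h2b : m (m q P) q = q := by
    show m (m (m (m f x) e) (m e f)) (m (m f x) e) = m (m f x) e
    simp only [assoc]
    rw [ee, ffz, hxPz]
  have h3 : q = x := uniq P q h2a h2b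
  have hqq : m q q = q := by
    show m (m (m f x) e) (m (m f x) e) = m (m f x) e
    simp only [assoc]
    rw [hxPz]
  have hxx : m x x = x := by rw [← h3]; exact hqq
  have h5 : i x = x := ds_idem_inv m i uniq hxx
  have h6 : i x = P := by rw [hx]; exact ds_inv_invol m i spec uniq P
  have h7 : x = P := by rw [← h5, h6]
  rw [← h7]; exact hxx

/-- idempotents commute -/
theorem ds_idem_comm (m : S → S → S) (i : S → S)
    (assoc : ∀ x y z : S, m (m x y) z = m x (m y z))
    (spec : ∀ x : S, m (m x (i x)) x = x ∧ m (m (i x) x) (i x) = i x)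
    (uniq : ∀ x y : S, m (m x y) x = x → m (m y x) y = y → y = i x)
    {e f : S} (he : m e e = e) (hf : m f f = f) :
    m e f = m f e := by
  have hPP := ds_idem_mul m i assoc spec uniq he hf
  have hQQ := ds_idem_mul m i assoc spec uniq hf he
  have ee : ∀ z, m e (m e z) = m e z := fun z => by rw [← assoc, he]
  have ffz : ∀ z, m f (m f z) = m f z := fun z => by rw [← assoc, hf]
  have hPP' : m e (m f (m e f)) = m e f := by simpa only [assoc] using hPP
  have hQQ' : m f (m e (m f e)) = m f e := by simpa only [assoc] using hQQ
  have s1 : m (m (m e f) (m f e)) (m e f) = m e f := by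
    simp only [assoc]
    rw [ffz, ee, hPP']
  have s2 : m (m (m f e) (m e f)) (m f e) = m f e := by
    simp only [assoc]
    rw [ee, ffz, hQQ']
  have h3 : m f e = i (m e f) := uniq (m e f) (m f e) s1 s2
  have h4 : i (m e f) = m e f := ds_idem_inv m i uniq hPP
  rw [h3, h4]

/-- anti-homomorphism of inversion -/
theorem ds_antihom (m : S → S → S) (i : S → S)
    (assoc : ∀ x y z : S, m (m x y) z = m x (m y z))
    (spec : ∀ x : S, m (m x (i x)) x = x ∧ m (m (i x) x) (i x) = i x)
    (uniq : ∀ x y : S, m (m x y) x = x → m (m y x) y = y → y = i x)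
    (x y : S) : i (m x y) = m (i y) (i x) := by
  have hu : m (m y (i y)) (m y (i y)) = m y (i y) := by
    have h0 := congrArg (fun t => m t (i y)) (spec y).1
    simpa only [assoc] using h0
  have hw : m (m (i x) x) (m (i x) x) = m (i x) x := by
    have h0 := congrArg (fun t => m t x) (spec x).2
    simpa only [assoc] using h0
  have comm := ds_idem_comm m i assoc spec uniq hu hw
  -- z-version of comm : u (w z) = w (u z)
  have commz : ∀ z, m y (m (i y) (m (i x) (m x z))) = m (i x) (m x (m y (m (i y) z))) :=
    fun z => by
      have h0 := congrArg (fun t => m t z) comm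
      simpa only [assoc] using h0
  have s1x : ∀ z, m x (m (i x) (m x z)) = m x z := fun z => by
    have h0 := congrArg (fun t => m t z) (spec x).1
    simpa only [assoc] using h0
  have s2y : ∀ z, m (i y) (m y (m (i y) z)) = m (i y) z := fun z => by
    have h0 := congrArg (fun t => m t z) (spec y).2
    simpa only [assoc] using h0
  have s1y : m y (m (i y) y) = y := by
    have h0 := (spec y).1; simpa only [assoc] using h0
  have s2x : m (i x) (m x (i x)) = i x := by
    have h0 := (spec x).2; simpa only [assoc] using h0
  have sand1 : m (m (m x y) (m (i y) (i x))) (m x y) = m x y := by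
    simp only [assoc]
    rw [commz, s1x, s1y]
  have sand2 : m (m (m (i y) (i x)) (m x y)) (m (i y) (i x)) = m (i y) (i x) := by
    simp only [assoc]
    rw [← commz, s2y, s2x]
  exact (uniq (m x y) (m (i y) (i x)) sand1 sand2).symm

end DIS

section DIS2
variable {S : Type*}

/-- vinv distributes over h -/
theorem ds_inv_distrib (h v : S → S → S) (vinv : S → S)
    (interchange : ∀ x y z w : S, v (h x y) (h z w) = h (v x z) (v y w))
    (vspec : ∀ x : S, v (v x (vinv x)) x = x ∧ v (v (vinv x) x) (vinv x) = vinv x)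
    (vuniq : ∀ x y : S, v (v x y) x = x → v (v y x) y = y → y = vinv x)
    (x y : S) : vinv (h x y) = h (vinv x) (vinv y) := by
  have s1 : v (v (h x y) (h (vinv x) (vinv y))) (h x y) = h x y := by
    rw [interchange, interchange]
    rw [(vspec x).1, (vspec y).1]
  have s2 : v (v (h (vinv x) (vinv y)) (h x y)) (h (vinv x) (vinv y)) =
      h (vinv x) (vinv y) := by
    rw [interchange, interchange]
    rw [(vspec x).2, (vspec y).2]
  exact (vuniq (h x y) (h (vinv x) (vinv y)) s1 s2).symm

/-- Lemma A : for s,t v-idempotent and h-idempotent, h s t = v s t -/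
theorem ds_lemA (h v : S → S → S) (hinv vinv : S → S)
    (hassoc : ∀ x y z : S, h (h x y) z = h x (h y z))
    (vassoc : ∀ x y z : S, v (v x y) z = v x (v y z))
    (interchange : ∀ x y z w : S, v (h x y) (h z w) = h (v x z) (v y w))
    (hspec : ∀ x : S, h (h x (hinv x)) x = x ∧ h (h (hinv x) x) (hinv x) = hinv x)
    (huniq : ∀ x y : S, h (h x y) x = x → h (h y x) y = y → y = hinv x)
    (vspec : ∀ x : S, v (v x (vinv x)) x = x ∧ v (v (vinv x) x) (vinv x) = vinv x)
    (vuniq : ∀ x y : S, v (v x y) x = x → v (v y x) y = y → y = vinv x)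
    {s t : S} (ds : v s s = s) (dt : v t t = t)
    (hs : h s s = s) (ht : h t t = t) :
    h s t = v s t := by
  have step1 : v (h s t) (h t s) = h (v s t) (v t s) := interchange s t t s
  have cts : h t s = h s t := ds_idem_comm h hinv hassoc hspec huniq ht hs
  have cvts : v t s = v s t := ds_idem_comm v vinv vassoc vspec vuniq dt ds
  have lhs1 : v (h s t) (h s t) = h s t := by
    rw [interchange, ds, dt]
  have rhs1 : h (v s t) (v s t) = v s t := by
    rw [← interchange, hs, ht]
  calc h s t = v (h s t) (h s t) := lhs1.symm
    _ = v (h s t) (h t s) := by rw [cts]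
    _ = h (v s t) (v t s) := step1
    _ = h (v s t) (v s t) := by rw [cvts]
    _ = v s t := rhs1

/-- T6 : v-idempotents are h-idempotent -/
theorem ds_T6 (h v : S → S → S) (hinv vinv : S → S)
    (hassoc : ∀ x y z : S, h (h x y) z = h x (h y z))
    (vassoc : ∀ x y z : S, v (v x y) z = v x (v y z))
    (interchange : ∀ x y z w : S, v (h x y) (h z w) = h (v x z) (v y w))
    (hspec : ∀ x : S, h (h x (hinv x)) x = x ∧ h (h (hinv x) x) (hinv x) = hinv x)
    (huniq : ∀ x y : S, h (h x y) x = x → h (h y x) y = y → y = hinv x)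
    (vspec : ∀ x : S, v (v x (vinv x)) x = x ∧ v (v (vinv x) x) (vinv x) = vinv x)
    (vuniq : ∀ x y : S, v (v x y) x = x → v (v y x) y = y → y = vinv x)
    {a : S} (da : v a a = a) : h a a = a := by
  have interchange' : ∀ x y z w : S, h (v x y) (v z w) = v (h x z) (h y w) :=
    fun x y z w => (interchange x z y w).symm
  set s := h a (hinv a) with hs_def
  set t := h (hinv a) a with ht_def
  -- h-idempotency of s and t
  have hss : h s s = s := by
    show h (h a (hinv a)) (h a (hinv a)) = h a (hinv a)
    have h0 := congrArg (fun z => h z (hinv a)) (hspec a).1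
    simpa only [hassoc] using h0
  have htt : h t t = t := by
    show h (h (hinv a) a) (h (hinv a) a) = h (hinv a) a
    have h0 := congrArg (fun z => h z a) (hspec a).2
    simpa only [hassoc] using h0
  -- v-idempotency of hinv a, s, t
  have dInv : v (hinv a) (hinv a) = hinv a := by
    have hd := ds_inv_distrib v h hinv interchange' hspec huniq a a
    rw [← hd, da]
  have dsv : v s s = s := by
    show v (h a (hinv a)) (h a (hinv a)) = h a (hinv a)
    rw [interchange, da, dInv]
  have dtv : v t t = t := by
    show v (h (hinv a) a) (h (hinv a) a) = h (hinv a) a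
    rw [interchange, dInv, da]
  have vcomm : ∀ {p q : S}, v p p = p → v q q = q → v p q = v q p :=
    fun hp hq => ds_idem_comm v vinv vassoc vspec vuniq hp hq
  -- absorption facts
  have sa : h s a = a := (hspec a).1
  have at' : h a t = a := by rw [ht_def, ← hassoc]; exact (hspec a).1
  set ρ := h a a with hρ_def
  have dρ : v ρ ρ = ρ := by rw [hρ_def, interchange, da]
  set σ' := h s t with hσ_def
  have dσ' : v σ' σ' = σ' := by rw [hσ_def, interchange, dsv, dtv]
  have lemA_st : h s t = v s t :=
    ds_lemA h v hinv vinv hassoc vassoc interchange hspec huniq vspec vuniq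
      dsv dtv hss htt
  -- EQ0 : a = v σ' ρ
  have eq0 : a = v σ' ρ := by
    have e1 : v (h s a) (h a t) = v a a := by rw [sa, at']
    have e2 : v (h s a) (h a t) = h (v s a) (v a t) := interchange s a a t
    have e3 : v a t = v t a := vcomm da dtv
    have e4 : h (v s a) (v t a) = v (h s t) (h a a) := (interchange s t a a).symm
    calc a = v a a := da.symm
      _ = v (h s a) (h a t) := e1.symm
      _ = h (v s a) (v a t) := e2
      _ = h (v s a) (v t a) := by rw [e3]
      _ = v (h s t) (h a a) := e4
      _ = v σ' ρ := rfl
  -- a v ρ = a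
  have aρ : v a ρ = a := by
    calc v a ρ = v (v σ' ρ) ρ := by rw [← eq0]
      _ = v σ' (v ρ ρ) := vassoc σ' ρ ρ
      _ = v σ' ρ := by rw [dρ]
      _ = a := eq0.symm
  set g := h σ' a with hg_def
  set a₃ := h ρ a with ha3_def
  have da₃ : v a₃ a₃ = a₃ := by rw [ha3_def, interchange, dρ, da]
  have dg : v g g = g := by rw [hg_def, interchange, dσ', da]
  -- EQ4 : ρ = v g a₃
  have eq4 : ρ = v g a₃ := by
    have e1 : h (v σ' ρ) (v a a) = h a a := by rw [← eq0, da]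
    have e2 : h (v σ' ρ) (v a a) = v (h σ' a) (h ρ a) := interchange' σ' ρ a a
    calc ρ = h a a := rfl
      _ = h (v σ' ρ) (v a a) := e1.symm
      _ = v (h σ' a) (h ρ a) := e2
      _ = v g a₃ := rfl
  -- step5 : v g a = g
  have σ's : v σ' s = σ' := by
    rw [hσ_def, lemA_st]
    calc v (v s t) s = v s (v t s) := vassoc s t s
      _ = v s (v s t) := by rw [vcomm dtv dsv]
      _ = v (v s s) t := (vassoc s s t).symm
      _ = v s t := by rw [dsv]
  have ga : v g a = g := by
    calc v g a = v (h σ' a) (h s a) := by rw [sa]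
      _ = h (v σ' s) (v a a) := interchange σ' a s a
      _ = h σ' a := by rw [σ's, da]
      _ = g := rfl
  -- step6 : v ρ a = ρ
  have ρa : v ρ a = ρ := by
    calc v ρ a = v (v g a₃) a := by rw [← eq4]
      _ = v g (v a₃ a) := vassoc g a₃ a
      _ = v g (v a a₃) := by rw [vcomm da₃ da]
      _ = v (v g a) a₃ := (vassoc g a a₃).symm
      _ = v g a₃ := by rw [ga]
      _ = ρ := eq4.symm
  -- conclude
  have : a = ρ := by
    calc a = v a ρ := aρ.symm
      _ = v ρ a := vcomm da dρ
      _ = ρ := ρa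
  exact this.symm

end DIS2
section DIS3
variable {S : Type*}

/-- T7 : operations agree on idempotent pairs -/
theorem ds_T7 (h v : S → S → S) (hinv vinv : S → S)
    (hassoc : ∀ x y z : S, h (h x y) z = h x (h y z))
    (vassoc : ∀ x y z : S, v (v x y) z = v x (v y z))
    (interchange : ∀ x y z w : S, v (h x y) (h z w) = h (v x z) (v y w))
    (hspec : ∀ x : S, h (h x (hinv x)) x = x ∧ h (h (hinv x) x) (hinv x) = hinv x)
    (huniq : ∀ x y : S, h (h x y) x = x → h (h y x) y = y → y = hinv x)
    (vspec : ∀ x : S, v (v x (vinv x)) x = x ∧ v (v (vinv x) x) (vinv x) = vinv x)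
    (vuniq : ∀ x y : S, v (v x y) x = x → v (v y x) y = y → y = vinv x)
    {e f : S} (de : v e e = e) (df : v f f = f) : h e f = v e f :=
  ds_lemA h v hinv vinv hassoc vassoc interchange hspec huniq vspec vuniq de df
    (ds_T6 h v hinv vinv hassoc vassoc interchange hspec huniq vspec vuniq de)
    (ds_T6 h v hinv vinv hassoc vassoc interchange hspec huniq vspec vuniq df)

/-- T9r : h x ε = v x ε for v-idempotent ε -/
theorem ds_T9r (h v : S → S → S) (hinv vinv : S → S)
    (hassoc : ∀ x y z : S, h (h x y) z = h x (h y z))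
    (vassoc : ∀ x y z : S, v (v x y) z = v x (v y z))
    (interchange : ∀ x y z w : S, v (h x y) (h z w) = h (v x z) (v y w))
    (hspec : ∀ x : S, h (h x (hinv x)) x = x ∧ h (h (hinv x) x) (hinv x) = hinv x)
    (huniq : ∀ x y : S, h (h x y) x = x → h (h y x) y = y → y = hinv x)
    (vspec : ∀ x : S, v (v x (vinv x)) x = x ∧ v (v (vinv x) x) (vinv x) = vinv x)
    (vuniq : ∀ x y : S, v (v x y) x = x → v (v y x) y = y → y = vinv x)
    (x : S) {ε : S} (dε : v ε ε = ε) : h x ε = v x ε := by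
  have interchange' : ∀ x y z w : S, h (v x y) (v z w) = v (h x z) (h y w) :=
    fun x y z w => (interchange x z y w).symm
  have T7 : ∀ {p q : S}, v p p = p → v q q = q → h p q = v p q := fun hp hq =>
    ds_T7 h v hinv vinv hassoc vassoc interchange hspec huniq vspec vuniq hp hq
  have σε : vinv ε = ε := ds_idem_inv v vinv vuniq dε
  have hεε : h ε ε = ε :=
    ds_T6 h v hinv vinv hassoc vassoc interchange hspec huniq vspec vuniq dε
  have iε : hinv ε = ε := ds_idem_inv h hinv huniq hεε
  set u := h x ε with hu
  set w := v x ε with hw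
  set Fx := v (vinv x) x with hFx
  have DFx : v Fx Fx = Fx := by
    show v (v (vinv x) x) (v (vinv x) x) = v (vinv x) x
    have h0 := congrArg (fun z => v z x) (vspec x).2
    simpa only [vassoc] using h0
  have vu : vinv u = h (vinv x) ε := by
    rw [hu, ds_inv_distrib h v vinv interchange vspec vuniq x ε, σε]
  have key0 : v (vinv u) u = h Fx ε := by
    rw [vu, hu, interchange, dε]
  have key1 : v u (h Fx ε) = u := by
    rw [← key0, ← vassoc]; exact (vspec u).1
  have T7F : h Fx ε = v Fx ε := T7 DFx dε
  have u_eq : u = v u (v Fx ε) := by rw [← T7F]; exact key1.symm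
  have ha : v u ε = u := by
    calc v u ε = v (v u (v Fx ε)) ε := congrArg (fun z => v z ε) u_eq
      _ = v u (v Fx (v ε ε)) := by rw [vassoc, vassoc]
      _ = v u (v Fx ε) := by rw [dε]
      _ = u := u_eq.symm
  have hb : v u ε = h w ε := by
    calc v u ε = v (h x ε) (h ε ε) := by rw [hεε]
      _ = h (v x ε) (v ε ε) := interchange x ε ε ε
      _ = h w ε := by rw [dε]
  set f := h (hinv x) x with hf
  have hff : h f f = f := by
    show h (h (hinv x) x) (h (hinv x) x) = h (hinv x) x
    have h0 := congrArg (fun z => h z x) (hspec x).2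
    simpa only [hassoc] using h0
  have Df : v f f = f :=
    ds_T6 v h vinv hinv vassoc hassoc interchange' vspec vuniq hspec huniq hff
  have hinvw : hinv w = v (hinv x) ε := by
    rw [hw, ds_inv_distrib v h hinv interchange' hspec huniq x ε, iε]
  have fw : h (hinv w) w = v f ε := by
    rw [hinvw, hw, interchange', hεε]
  have Dvfε : v (v f ε) (v f ε) = v f ε :=
    ds_idem_mul v vinv vassoc vspec vuniq Df dε
  have T7fε : h (v f ε) ε = v (v f ε) ε := T7 Dvfε dε
  have w_fw : h w (h (hinv w) w) = w := by
    rw [← hassoc]; exact (hspec w).1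
  have hc : h w ε = w := by
    calc h w ε = h (h w (h (hinv w) w)) ε := by rw [w_fw]
      _ = h w (h (h (hinv w) w) ε) := by rw [hassoc]
      _ = h w (h (v f ε) ε) := by rw [fw]
      _ = h w (v (v f ε) ε) := by rw [T7fε]
      _ = h w (v f (v ε ε)) := by rw [vassoc]
      _ = h w (v f ε) := by rw [dε]
      _ = h w (h (hinv w) w) := by rw [← fw]
      _ = w := w_fw
  calc h x ε = u := rfl
    _ = v u ε := ha.symm
    _ = h w ε := hb
    _ = w := hc

/-- T9l : h ε x = v ε x for v-idempotent ε -/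
theorem ds_T9l (h v : S → S → S) (hinv vinv : S → S)
    (hassoc : ∀ x y z : S, h (h x y) z = h x (h y z))
    (vassoc : ∀ x y z : S, v (v x y) z = v x (v y z))
    (interchange : ∀ x y z w : S, v (h x y) (h z w) = h (v x z) (v y w))
    (hspec : ∀ x : S, h (h x (hinv x)) x = x ∧ h (h (hinv x) x) (hinv x) = hinv x)
    (huniq : ∀ x y : S, h (h x y) x = x → h (h y x) y = y → y = hinv x)
    (vspec : ∀ x : S, v (v x (vinv x)) x = x ∧ v (v (vinv x) x) (vinv x) = vinv x)
    (vuniq : ∀ x y : S, v (v x y) x = x → v (v y x) y = y → y = vinv x)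
    (x : S) {ε : S} (dε : v ε ε = ε) : h ε x = v ε x := by
  have interchange' : ∀ x y z w : S, h (v x y) (v z w) = v (h x z) (h y w) :=
    fun x y z w => (interchange x z y w).symm
  have T7 : ∀ {p q : S}, v p p = p → v q q = q → h p q = v p q := fun hp hq =>
    ds_T7 h v hinv vinv hassoc vassoc interchange hspec huniq vspec vuniq hp hq
  have σε : vinv ε = ε := ds_idem_inv v vinv vuniq dε
  have hεε : h ε ε = ε :=
    ds_T6 h v hinv vinv hassoc vassoc interchange hspec huniq vspec vuniq dε
  have iε : hinv ε = ε := ds_idem_inv h hinv huniq hεε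
  set u := h ε x with hu
  set w := v ε x with hw
  set Ex := v x (vinv x) with hEx
  have DEx : v Ex Ex = Ex := by
    show v (v x (vinv x)) (v x (vinv x)) = v x (vinv x)
    have h0 := congrArg (fun z => v z (vinv x)) (vspec x).1
    simpa only [vassoc] using h0
  have vu : vinv u = h ε (vinv x) := by
    rw [hu, ds_inv_distrib h v vinv interchange vspec vuniq ε x, σε]
  have key0 : v u (vinv u) = h ε Ex := by
    rw [vu, hu, interchange, dε]
  have key1 : v (h ε Ex) u = u := by
    rw [← key0]; exact (vspec u).1
  have T7E : h ε Ex = v ε Ex := T7 dε DEx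
  have u_eq : u = v (v ε Ex) u := by rw [← T7E]; exact key1.symm
  have ha : v ε u = u := by
    calc v ε u = v ε (v (v ε Ex) u) := congrArg (fun z => v ε z) u_eq
      _ = v (v (v ε ε) Ex) u := by rw [← vassoc, ← vassoc]
      _ = v (v ε Ex) u := by rw [dε]
      _ = u := u_eq.symm
  have hb : v ε u = h ε w := by
    calc v ε u = v (h ε ε) (h ε x) := by rw [hεε]
      _ = h (v ε ε) (v ε x) := interchange ε ε ε x
      _ = h ε w := by rw [dε]
  set e := h x (hinv x) with he
  have hee : h e e = e := by
    show h (h x (hinv x)) (h x (hinv x)) = h x (hinv x)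
    have h0 := congrArg (fun z => h z (hinv x)) (hspec x).1
    simpa only [hassoc] using h0
  have De : v e e = e :=
    ds_T6 v h vinv hinv vassoc hassoc interchange' vspec vuniq hspec huniq hee
  have hinvw : hinv w = v ε (hinv x) := by
    rw [hw, ds_inv_distrib v h hinv interchange' hspec huniq ε x, iε]
  have ew : h w (hinv w) = v ε e := by
    rw [hinvw, hw, interchange', hεε]
  have Dvεe : v (v ε e) (v ε e) = v ε e :=
    ds_idem_mul v vinv vassoc vspec vuniq dε De
  have T7εe : h ε (v ε e) = v ε (v ε e) := T7 dε Dvεe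
  have w_ew : h (h w (hinv w)) w = w := (hspec w).1
  have hc : h ε w = w := by
    calc h ε w = h ε (h (h w (hinv w)) w) := by rw [w_ew]
      _ = h (h ε (h w (hinv w))) w := by rw [← hassoc]
      _ = h (h ε (v ε e)) w := by rw [ew]
      _ = h (v ε (v ε e)) w := by rw [T7εe]
      _ = h (v (v ε ε) e) w := by rw [← vassoc]
      _ = h (v ε e) w := by rw [dε]
      _ = h (h w (hinv w)) w := by rw [← ew]
      _ = w := w_ew
  calc h ε x = u := rfl
    _ = v ε u := ha.symm
    _ = h ε w := hb
    _ = w := hc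

end DIS3
/-- (A *h B *h A⁻¹ *h B⁻¹ *h A *h B) *v (a *h b) *v (A *h B *h A⁻¹ *h B⁻¹ *h A *h B) = A *h B *h A⁻¹ *h B⁻¹ *h A *h B, where A = σ(a), B = σ(b). -/
theorem claim2_ab {S : Type*} (h v : S → S → S)
    (hassoc : ∀ x y z : S, h (h x y) z = h x (h y z))
    (vassoc : ∀ x y z : S, v (v x y) z = v x (v y z))
    (interchange : ∀ x y z w : S, v (h x y) (h z w) = h (v x z) (v y w))
    (hinv vinv : S → S)
    (hinv_spec : ∀ x : S, h (h x (hinv x)) x = x ∧ h (h (hinv x) x) (hinv x) = hinv x)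
    (hinv_unique : ∀ x y : S, h (h x y) x = x → h (h y x) y = y → y = hinv x)
    (vinv_spec : ∀ x : S, v (v x (vinv x)) x = x ∧ v (v (vinv x) x) (vinv x) = vinv x)
    (vinv_unique : ∀ x y : S, v (v x y) x = x → v (v y x) y = y → y = vinv x) :
    ∀ a b : S, v (v (h (h (h (h (h (vinv a) (vinv b)) (hinv (vinv a))) (hinv (vinv b))) (vinv a)) (vinv b)) (h a b)) (h (h (h (h (h (vinv a) (vinv b)) (hinv (vinv a))) (hinv (vinv b))) (vinv a)) (vinv b)) = h (h (h (h (h (vinv a) (vinv b)) (hinv (vinv a))) (hinv (vinv b))) (vinv a)) (vinv b) := by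
  have interchange' : ∀ x y z w : S, h (v x y) (v z w) = v (h x z) (h y w) :=
    fun x y z w => (interchange x z y w).symm
  have T9r : ∀ (x : S) {ε : S}, v ε ε = ε → h x ε = v x ε := fun x _ dε =>
    ds_T9r h v hinv vinv hassoc vassoc interchange hinv_spec hinv_unique vinv_spec
      vinv_unique x dε
  have T9l : ∀ (x : S) {ε : S}, v ε ε = ε → h ε x = v ε x := fun x _ dε =>
    ds_T9l h v hinv vinv hassoc vassoc interchange hinv_spec hinv_unique vinv_spec
      vinv_unique x dε
  -- absorption helpers
  have xFx : ∀ x : S, v x (v (vinv x) x) = x := fun x => by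
    rw [← vassoc]; exact (vinv_spec x).1
  have Fσ : ∀ x : S, v (v (vinv x) x) (vinv x) = vinv x := fun x => (vinv_spec x).2
  have Ex_x : ∀ x : S, v (v x (vinv x)) x = x := fun x => (vinv_spec x).1
  have σEx : ∀ x : S, v (vinv x) (v x (vinv x)) = vinv x := fun x => by
    rw [← vassoc]; exact (vinv_spec x).2
  have DFx : ∀ x : S, v (v (vinv x) x) (v (vinv x) x) = v (vinv x) x := fun x => by
    have h0 := congrArg (fun z => v z x) (vinv_spec x).2
    simpa only [vassoc] using h0
  have DEx : ∀ x : S, v (v x (vinv x)) (v x (vinv x)) = v x (vinv x) := fun x => by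
    have h0 := congrArg (fun z => v z (vinv x)) (vinv_spec x).1
    simpa only [vassoc] using h0
  -- phase 5 : h x (vinv x) = v x (vinv x), etc.
  have hxσ : ∀ x : S, h x (vinv x) = v x (vinv x) := fun x => by
    have e1 : h (v x (v (vinv x) x)) (v (v (vinv x) x) (vinv x)) = h x (vinv x) := by
      rw [xFx, Fσ]
    have e2 : h (v x (v (vinv x) x)) (v (v (vinv x) x) (vinv x)) =
        v (h x (v (vinv x) x)) (h (v (vinv x) x) (vinv x)) :=
      interchange' x (v (vinv x) x) (v (vinv x) x) (vinv x)
    calc h x (vinv x)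
        = v (h x (v (vinv x) x)) (h (v (vinv x) x) (vinv x)) := e1.symm.trans e2
      _ = v (v x (v (vinv x) x)) (v (v (vinv x) x) (vinv x)) := by
          rw [T9r x (DFx x), T9l (vinv x) (DFx x)]
      _ = v x (vinv x) := by rw [xFx, Fσ]
  have hσx : ∀ x : S, h (vinv x) x = v (vinv x) x := fun x => by
    have e1 : h (v (vinv x) (v x (vinv x))) (v (v x (vinv x)) x) = h (vinv x) x := by
      rw [σEx, Ex_x]
    have e2 : h (v (vinv x) (v x (vinv x))) (v (v x (vinv x)) x) =
        v (h (vinv x) (v x (vinv x))) (h (v x (vinv x)) x) :=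
      interchange' (vinv x) (v x (vinv x)) (v x (vinv x)) x
    calc h (vinv x) x
        = v (h (vinv x) (v x (vinv x))) (h (v x (vinv x)) x) := e1.symm.trans e2
      _ = v (v (vinv x) (v x (vinv x))) (v (v x (vinv x)) x) := by
          rw [T9r (vinv x) (DEx x), T9l x (DEx x)]
      _ = v (vinv x) x := by rw [σEx, Ex_x]
  -- T4 : vinv = hinv
  have T4 : ∀ x : S, vinv x = hinv x := fun x => by
    apply hinv_unique x (vinv x)
    · rw [hxσ x, T9l x (DEx x)]
      exact (vinv_spec x).1
    · rw [hσx x, T9l (vinv x) (DFx x)]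
      exact (vinv_spec x).2
  have hinv_invol : ∀ x : S, hinv (hinv x) = x :=
    ds_inv_invol h hinv hinv_spec hinv_unique
  have antihom_h : ∀ x y : S, hinv (h x y) = h (hinv y) (hinv x) :=
    ds_antihom h hinv hassoc hinv_spec hinv_unique
  have distrib : ∀ x y : S, vinv (h x y) = h (vinv x) (vinv y) :=
    ds_inv_distrib h v vinv interchange vinv_spec vinv_unique
  -- commutativity of h
  have hcomm : ∀ p q : S, h p q = h q p := by
    have key : ∀ x y : S, h (hinv x) (hinv y) = h (hinv y) (hinv x) := fun x y => by
      calc h (hinv x) (hinv y) = h (vinv x) (vinv y) := by rw [← T4 x, ← T4 y]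
        _ = vinv (h x y) := (distrib x y).symm
        _ = hinv (h x y) := T4 (h x y)
        _ = h (hinv y) (hinv x) := antihom_h x y
    intro p q
    have := key (hinv p) (hinv q)
    rwa [hinv_invol p, hinv_invol q] at this
  -- final assembly
  intro a b
  have hA : hinv (vinv a) = a := by
    rw [← T4 (vinv a)]; exact ds_inv_invol v vinv vinv_spec vinv_unique a
  have hB : hinv (vinv b) = b := by
    rw [← T4 (vinv b)]; exact ds_inv_invol v vinv vinv_spec vinv_unique b
  rw [hA, hB]
  set A := vinv a with hAdef
  set B := vinv b with hBdef
  have sA : h (h A a) A = A := by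
    have := (hinv_spec A).1; rwa [hA] at this
  have sB : h (h B b) B = B := by
    have := (hinv_spec B).1; rwa [hB] at this
  have c1 : h (h A B) a = h (h A a) B :=
    (hassoc A B a).trans ((congrArg (h A) (hcomm B a)).trans (hassoc A a B).symm)
  have c2 : h (h (h A a) (h B b)) A = h (h (h A a) A) (h B b) :=
    (hassoc (h A a) (h B b) A).trans
      ((congrArg (h (h A a)) (hcomm (h B b) A)).trans (hassoc (h A a) A (h B b)).symm)
  have wAB : h (h (h (h (h A B) a) b) A) B = h A B := by
    calc h (h (h (h (h A B) a) b) A) B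
        = h (h (h (h (h A a) B) b) A) B := by rw [c1]
      _ = h (h (h (h A a) (h B b)) A) B := by rw [hassoc (h A a) B b]
      _ = h (h (h (h A a) A) (h B b)) B := by rw [c2]
      _ = h (h A (h B b)) B := by rw [sA]
      _ = h A (h (h B b) B) := hassoc A (h B b) B
      _ = h A B := by rw [sB]
  rw [wAB, hAdef, hBdef, ← distrib a b]
  exact (vinv_spec (h a b)).2
end
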